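/- There exists a constant C > 0, depending only on R, such that the Christoffel symbols Γ^a_{bc} of the Cartesian Schwarzschild metric G satisfy |Γ^a_{bc}(x₀,x)| ≤ C/|x|² for all indices a,b,c ∈ {0,1,2,3} and all points (x₀,x) with |x| ≥ 2R. (Since the Christoffel symbols of the flat Minkowski metric vanish in Cartesian coordinates, this says that the perturbation of the Christoffel symbols due to R is O(r⁻²).) -/

import Mathlib

noncomputable section

/-- Partial derivative of `f` in the `i`-th coordinate direction at `p`. -/
def coordPDeriv {n : ℕ} (f : (Fin n → ℝ) → ℝ) (i : Fin n) (p : Fin n → ℝ) : ℝ :=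
  fderiv ℝ f p (Pi.single i 1)

/-- Christoffel symbols `Γ^k_{ij}` of a metric `g` given in coordinates on (an open
subset of) `ℝⁿ`: `Γ^k_{ij} = (1/2) Σ_l g^{kl} (∂_i g_{jl} + ∂_j g_{il} − ∂_l g_{ij})`. -/
def christoffel {n : ℕ} (g : (Fin n → ℝ) → Matrix (Fin n) (Fin n) ℝ)
    (k i j : Fin n) (p : Fin n → ℝ) : ℝ :=
  (1 / 2) * ∑ l, (g p)⁻¹ k l *
    (coordPDeriv (fun q => g q j l) i p + coordPDeriv (fun q => g q i l) j p
      - coordPDeriv (fun q => g q i j) l p)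

/-- The Euclidean norm `|x|` of the spatial part of a point `(x₀, x₁, x₂, x₃) ∈ ℝ⁴`. -/
def spatialNorm (p : Fin 4 → ℝ) : ℝ :=
  Real.sqrt ((p 1) ^ 2 + (p 2) ^ 2 + (p 3) ^ 2)

/-- The Schwarzschild metric in Cartesian coordinates `(x₀, x₁, x₂, x₃)`:
`G_{00} = 1 − R/|x|`, `G_{0i} = G_{i0} = 0`, and
`G_{ij} = −δ_{ij} − R·x_i·x_j/(|x|²·(|x| − R))` for spatial indices `i, j`. -/
def cartMetric (R : ℝ) (p : Fin 4 → ℝ) : Matrix (Fin 4) (Fin 4) ℝ :=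
  Matrix.of fun a b =>
    if a = 0 then (if b = 0 then 1 - R / spatialNorm p else 0)
    else if b = 0 then 0
    else -(if a = b then (1 : ℝ) else 0)
      - R * p a * p b / ((spatialNorm p) ^ 2 * (spatialNorm p - R))

open Matrix

/-!
Write `x` for the spatial part of the point (with time component `0`) and `s = |x|`. The
metric is a rank-two perturbation of the Minkowski metric `η`,
`G = η - (R/s) e₀e₀ᵀ - R/(s²(s - R)) xxᵀ`,
and since `e₀` and `x` are orthogonal eigenvectors of `η` (eigenvalues `1` and `-1`), its inverse
has the same shape, `G⁻¹ = η + R/(s - R) e₀e₀ᵀ + (R/s³) xxᵀ`; for `s ≥ 2R` all its entries are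
bounded by `5/2`. There the coefficient `R/(s²(s - R))` is `O(R/s³)` with derivative `O(R/s⁴)`,
while `|x| ≤ s` and `|∂ᵢs| ≤ 1`, so every first derivative of `G` is `O(R/s²)`; hence so is every
Christoffel symbol.
-/

section CoordPDeriv

variable {n : ℕ} {f g : (Fin n → ℝ) → ℝ} {p : Fin n → ℝ} (i : Fin n)

theorem ContinuousLinearMap.coordPDeriv_eq (L : (Fin n → ℝ) →L[ℝ] ℝ) :
    coordPDeriv L i p = L (Pi.single i 1) := by
  rw [coordPDeriv, L.fderiv]

theorem coordPDeriv_apply (j : Fin n) :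
    coordPDeriv (fun q => q j) i p = (Pi.single i 1 : Fin n → ℝ) j :=
  (ContinuousLinearMap.proj (R := ℝ) (φ := fun _ : Fin n => ℝ) j).coordPDeriv_eq i

theorem coordPDeriv_const_sub (c : ℝ) :
    coordPDeriv (fun q => c - f q) i p = -coordPDeriv f i p := by
  simp [coordPDeriv, fderiv_const_sub]

theorem coordPDeriv_add (hf : DifferentiableAt ℝ f p) (hg : DifferentiableAt ℝ g p) :
    coordPDeriv (fun q => f q + g q) i p = coordPDeriv f i p + coordPDeriv g i p := by
  simp [coordPDeriv, fderiv_fun_add hf hg]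

theorem coordPDeriv_sub (hf : DifferentiableAt ℝ f p) (hg : DifferentiableAt ℝ g p) :
    coordPDeriv (fun q => f q - g q) i p = coordPDeriv f i p - coordPDeriv g i p := by
  simp [coordPDeriv, fderiv_fun_sub hf hg]

theorem coordPDeriv_mul (hf : DifferentiableAt ℝ f p) (hg : DifferentiableAt ℝ g p) :
    coordPDeriv (fun q => f q * g q) i p = coordPDeriv f i p * g p + f p * coordPDeriv g i p := by
  simp only [coordPDeriv, fderiv_fun_mul hf hg, _root_.add_apply, _root_.smul_apply, smul_eq_mul]
  ring

theorem HasDerivAt.coordPDeriv_comp {φ : ℝ → ℝ} {φ' : ℝ} (hφ : HasDerivAt φ φ' (f p))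
    (hf : DifferentiableAt ℝ f p) :
    coordPDeriv (fun q => φ (f q)) i p = φ' * coordPDeriv f i p := by
  change fderiv ℝ (φ ∘ f) p _ = _
  rw [(hφ.comp_hasFDerivAt p hf.hasFDerivAt).fderiv]
  rfl

end CoordPDeriv

theorem abs_christoffel_le {n : ℕ} {g : (Fin n → ℝ) → Matrix (Fin n) (Fin n) ℝ} {p : Fin n → ℝ}
    {A B : ℝ} (hA : ∀ k l, |(g p)⁻¹ k l| ≤ A)
    (hB : ∀ a b l, |coordPDeriv (fun q => g q a b) l p| ≤ B) (k i j : Fin n) :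
    |christoffel g k i j p| ≤ 3 / 2 * n * A * B := by
  have hterm : ∀ l, |(g p)⁻¹ k l * (coordPDeriv (fun q => g q j l) i p
      + coordPDeriv (fun q => g q i l) j p - coordPDeriv (fun q => g q i j) l p)| ≤ A * (3 * B) := by
    intro l
    rw [abs_mul]
    refine mul_le_mul (hA k l) ?_ (abs_nonneg _) ((abs_nonneg _).trans (hA k l))
    calc _ ≤ |coordPDeriv (fun q => g q j l) i p| + |coordPDeriv (fun q => g q i l) j p|
          + |coordPDeriv (fun q => g q i j) l p| :=
            (abs_sub _ _).trans (by gcongr; exact abs_add_le _ _)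
      _ ≤ 3 * B := by linarith [hB j l i, hB i l j, hB i j l]
  rw [christoffel, abs_mul, abs_of_pos one_half_pos]
  calc _ ≤ 1 / 2 * ∑ _l : Fin n, A * (3 * B) := by
        gcongr
        exact (Finset.abs_sum_le_sum_abs _ _).trans (Finset.sum_le_sum fun l _ => hterm l)
    _ = 3 / 2 * n * A * B := by
        simp only [Finset.sum_const, Finset.card_univ, Fintype.card_fin, nsmul_eq_mul]
        ring

theorem Matrix.rankTwo_perturbation_mul {n K : Type*} [Fintype n] [DecidableEq n] [CommRing K]
    {η : Matrix n n K} {u v : n → K} (hη : η * η = 1) (hηt : ηᵀ = η)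
    (hu : η *ᵥ u = u) (hv : η *ᵥ v = -v) (huv : u ⬝ᵥ v = 0) (a b c d : K) :
    (η - a • vecMulVec u u - c • vecMulVec v v) * (η + b • vecMulVec u u + d • vecMulVec v v)
      = 1 + (b - a - a * b * (u ⬝ᵥ u)) • vecMulVec u u
          + (c - d - c * d * (v ⬝ᵥ v)) • vecMulVec v v := by
  have hu' : u ᵥ* η = u := by rw [← hηt, vecMul_transpose, hu]
  have hv' : v ᵥ* η = -v := by rw [← hηt, vecMul_transpose, hv]
  have hvu : v ⬝ᵥ u = 0 := by rw [dotProduct_comm, huv]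
  simp only [mul_add, sub_mul, Matrix.smul_mul, Matrix.mul_smul, mul_vecMulVec, vecMulVec_mul,
    smul_mulVec, vecMulVec_mulVec, hu, hv, hu', hv', hη]
  ext i j
  simp only [vecMulVec_neg, smul_neg, sub_neg_eq_add, op_smul_eq_smul, smul_vecMulVec, huv, hvu,
    MulOpposite.op_zero, zero_smul, smul_zero, zero_vecMulVec, sub_zero, neg_vecMulVec, add_apply,
    sub_apply, smul_apply, vecMulVec_apply, smul_eq_mul, neg_apply]
  ring

theorem abs_div_sq_mul_sub_le {R t : ℝ} (hR : 0 < R) (ht : 2 * R ≤ t) :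
    |R / (t ^ 2 * (t - R))| ≤ 2 * R / t ^ 3 := by
  have ht0 : 0 < t := by linarith
  have htR : 0 < t - R := by linarith
  rw [abs_of_pos (by positivity), div_le_div_iff₀ (by positivity) (by positivity)]
  nlinarith [mul_nonneg (mul_nonneg hR.le (sq_nonneg t)) (sub_nonneg.2 ht)]

theorem abs_deriv_div_sq_mul_sub_le {R t : ℝ} (hR : 0 < R) (ht : 2 * R ≤ t) :
    |-(R * (3 * t ^ 2 - 2 * R * t)) / (t ^ 2 * (t - R)) ^ 2| ≤ 12 * R / t ^ 4 := by
  have ht0 : 0 < t := by linarith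
  have hnum : 0 ≤ R * (3 * t ^ 2 - 2 * R * t) := by nlinarith [mul_pos hR ht0]
  have hden : t ^ 6 / 4 ≤ (t ^ 2 * (t - R)) ^ 2 := by
    have : t ^ 2 / 4 ≤ (t - R) ^ 2 := by nlinarith
    calc t ^ 6 / 4 = t ^ 4 * (t ^ 2 / 4) := by ring
      _ ≤ t ^ 4 * (t - R) ^ 2 := by gcongr
      _ = (t ^ 2 * (t - R)) ^ 2 := by ring
  rw [abs_div, abs_neg, abs_of_nonneg hnum, abs_of_nonneg (sq_nonneg _)]
  calc _ ≤ 3 * R * t ^ 2 / (t ^ 6 / 4) :=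
        div_le_div₀ (by positivity) (by nlinarith [mul_pos hR ht0]) (by positivity) hden
    _ = 12 * R / t ^ 4 := by field_simp; ring

def spatialPart : (Fin 4 → ℝ) →L[ℝ] (Fin 4 → ℝ) :=
  ContinuousLinearMap.pi fun a => if a = 0 then 0 else ContinuousLinearMap.proj a

theorem spatialPart_apply (p : Fin 4 → ℝ) (a : Fin 4) :
    spatialPart p a = if a = 0 then 0 else p a := by
  split_ifs with h <;> simp [spatialPart, h]

theorem abs_spatialPart_single_le (i a : Fin 4) : |spatialPart (Pi.single i 1) a| ≤ 1 := by
  rw [spatialPart_apply, Pi.single_apply]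
  split_ifs <;> simp

theorem coordPDeriv_spatialPart (p : Fin 4 → ℝ) (i a : Fin 4) :
    coordPDeriv (fun q => spatialPart q a) i p = spatialPart (Pi.single i 1) a :=
  ((ContinuousLinearMap.proj a).comp spatialPart).coordPDeriv_eq i

theorem spatialNorm_nonneg (p : Fin 4 → ℝ) : 0 ≤ spatialNorm p := Real.sqrt_nonneg _

theorem spatialNorm_sq (p : Fin 4 → ℝ) : spatialNorm p ^ 2 = spatialPart p ⬝ᵥ spatialPart p := by
  rw [spatialNorm, Real.sq_sqrt (by positivity)]
  simp [dotProduct, Fin.sum_univ_four, spatialPart_apply, sq]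

theorem abs_spatialPart_le (p : Fin 4 → ℝ) (a : Fin 4) : |spatialPart p a| ≤ spatialNorm p := by
  calc |spatialPart p a| = √(spatialPart p a * spatialPart p a) :=
        (Real.sqrt_mul_self_eq_abs _).symm
    _ ≤ √(spatialPart p ⬝ᵥ spatialPart p) :=
      Real.sqrt_le_sqrt (Finset.single_le_sum (fun j _ => mul_self_nonneg _) (Finset.mem_univ a))
    _ = spatialNorm p := by rw [← spatialNorm_sq, Real.sqrt_sq (spatialNorm_nonneg p)]

theorem differentiableAt_spatialNorm {p : Fin 4 → ℝ} (hp : spatialNorm p ≠ 0) :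
    DifferentiableAt ℝ spatialNorm p := by
  unfold spatialNorm
  fun_prop (disch := exact fun h => hp (by simp [spatialNorm, h]))

theorem coordPDeriv_spatialNorm {p : Fin 4 → ℝ} (hp : spatialNorm p ≠ 0) (i : Fin 4) :
    coordPDeriv spatialNorm i p = spatialPart p i / spatialNorm p := by
  have hsq (j : Fin 4) :
      coordPDeriv (fun q => q j ^ 2) i p = 2 * p j * (Pi.single i 1 : Fin 4 → ℝ) j := by
    rw [(hasDerivAt_pow 2 (p j)).coordPDeriv_comp (f := fun q => q j) i (by fun_prop),
      coordPDeriv_apply]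
    simp
  have hsum : coordPDeriv (fun q : Fin 4 → ℝ => q 1 ^ 2 + q 2 ^ 2 + q 3 ^ 2) i p
      = 2 * spatialPart p i := by
    rw [coordPDeriv_add _ (by fun_prop) (by fun_prop),
      coordPDeriv_add _ (by fun_prop) (by fun_prop), hsq, hsq, hsq]
    fin_cases i <;> simp [spatialPart_apply]
  have hpos : p 1 ^ 2 + p 2 ^ 2 + p 3 ^ 2 ≠ 0 := fun h => hp (by simp [spatialNorm, h])
  rw [show spatialNorm = fun q => √(q 1 ^ 2 + q 2 ^ 2 + q 3 ^ 2) from rfl,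
    (Real.hasDerivAt_sqrt hpos).coordPDeriv_comp i (by fun_prop), hsum]
  field_simp

def minkowski : Matrix (Fin 4) (Fin 4) ℝ := diagonal fun a => if a = 0 then 1 else -1

local notation "e₀" => (Pi.single 0 1 : Fin 4 → ℝ)

theorem minkowski_mul_self : minkowski * minkowski = 1 := by
  rw [minkowski, diagonal_mul_diagonal, ← diagonal_one]
  congr; ext a; split_ifs <;> norm_num

theorem minkowski_mulVec_single_zero : minkowski *ᵥ e₀ = e₀ := by
  ext a; by_cases a = 0 <;> simp [minkowski, mulVec_diagonal, *]

theorem minkowski_mulVec_spatialPart (p : Fin 4 → ℝ) :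
    minkowski *ᵥ spatialPart p = -spatialPart p := by
  ext a; by_cases a = 0 <;> simp [minkowski, mulVec_diagonal, spatialPart_apply, *]

theorem abs_single_zero_mul_le (a b : Fin 4) : |e₀ a * e₀ b| ≤ 1 := by
  rw [Pi.single_apply, Pi.single_apply]; split_ifs <;> simp

theorem cartMetric_apply (R : ℝ) (p : Fin 4 → ℝ) (a b : Fin 4) :
    cartMetric R p a b = minkowski a b - R / spatialNorm p * (e₀ a * e₀ b)
      - R / (spatialNorm p ^ 2 * (spatialNorm p - R)) * (spatialPart p a * spatialPart p b) := by
  fin_cases a <;> fin_cases b <;> simp [cartMetric, minkowski, spatialPart_apply] <;> ring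

theorem cartMetric_eq (R : ℝ) (p : Fin 4 → ℝ) :
    cartMetric R p = minkowski - (R / spatialNorm p) • vecMulVec e₀ e₀
      - (R / (spatialNorm p ^ 2 * (spatialNorm p - R)))
        • vecMulVec (spatialPart p) (spatialPart p) := by
  ext a b
  simp [cartMetric_apply, vecMulVec_apply]

theorem inv_cartMetric {R : ℝ} {p : Fin 4 → ℝ} (hs : spatialNorm p ≠ 0) (hsR : spatialNorm p ≠ R) :
    (cartMetric R p)⁻¹ = minkowski + (R / (spatialNorm p - R)) • vecMulVec e₀ e₀
      + (R / spatialNorm p ^ 3) • vecMulVec (spatialPart p) (spatialPart p) := by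
  refine inv_eq_right_inv ?_
  have hsR' : spatialNorm p - R ≠ 0 := sub_ne_zero.mpr hsR
  have htime : R / (spatialNorm p - R) - R / spatialNorm p
      - R / spatialNorm p * (R / (spatialNorm p - R)) * (e₀ ⬝ᵥ e₀) = 0 := by
    simp only [single_dotProduct, Pi.single_eq_same, mul_one]
    field_simp
    ring
  have hspace : R / (spatialNorm p ^ 2 * (spatialNorm p - R)) - R / spatialNorm p ^ 3
      - R / (spatialNorm p ^ 2 * (spatialNorm p - R)) * (R / spatialNorm p ^ 3)
        * spatialNorm p ^ 2 = 0 := by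
    field_simp
    ring
  rw [cartMetric_eq, rankTwo_perturbation_mul minkowski_mul_self (by simp [minkowski])
    minkowski_mulVec_single_zero (minkowski_mulVec_spatialPart p) (by simp [spatialPart_apply]),
    ← spatialNorm_sq, htime, hspace]
  simp

theorem coordPDeriv_cartMetric {R : ℝ} {p : Fin 4 → ℝ} (hs : spatialNorm p ≠ 0)
    (hsR : spatialNorm p ≠ R) (a b i : Fin 4) :
    coordPDeriv (fun q => cartMetric R q a b) i p =
      R / spatialNorm p ^ 2 * (spatialPart p i / spatialNorm p) * (e₀ a * e₀ b)
      - (-(R * (3 * spatialNorm p ^ 2 - 2 * R * spatialNorm p))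
            / (spatialNorm p ^ 2 * (spatialNorm p - R)) ^ 2
          * (spatialPart p i / spatialNorm p) * (spatialPart p a * spatialPart p b)
        + R / (spatialNorm p ^ 2 * (spatialNorm p - R))
          * (spatialPart (Pi.single i 1) a * spatialPart p b
            + spatialPart p a * spatialPart (Pi.single i 1) b)) := by
  have hN := differentiableAt_spatialNorm hs
  have hden : spatialNorm p ^ 2 * (spatialNorm p - R) ≠ 0 :=
    mul_ne_zero (pow_ne_zero 2 hs) (sub_ne_zero.mpr hsR)
  have htime := ((hasDerivAt_const _ R).fun_div (hasDerivAt_id' _) hs).mul_const (e₀ a * e₀ b)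
  have hspace := (hasDerivAt_const _ R).fun_div (d := fun t => t ^ 2 * (t - R))
    ((hasDerivAt_pow 2 _).mul ((hasDerivAt_id' _).sub_const R)) hden
  simp only [cartMetric_apply]
  rw [coordPDeriv_sub _ (by fun_prop (disch := assumption)) (by fun_prop (disch := assumption)),
    coordPDeriv_const_sub, htime.coordPDeriv_comp _ hN,
    coordPDeriv_mul _ (by fun_prop (disch := assumption)) (by fun_prop),
    hspace.coordPDeriv_comp _ hN, coordPDeriv_mul _ (by fun_prop) (by fun_prop),
    coordPDeriv_spatialNorm hs, coordPDeriv_spatialPart, coordPDeriv_spatialPart]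
  ring

section FarField

variable {R : ℝ} (hR : 0 < R) {p : Fin 4 → ℝ} (hp : 2 * R ≤ spatialNorm p)
include hR hp

theorem abs_inv_cartMetric_le (a b : Fin 4) : |(cartMetric R p)⁻¹ a b| ≤ 5 / 2 := by
  have hxa := abs_spatialPart_le p a
  have hxb := abs_spatialPart_le p b
  rw [inv_cartMetric (by linarith) (by linarith)]
  simp only [Matrix.add_apply, Matrix.smul_apply, vecMulVec_apply, smul_eq_mul]
  generalize spatialNorm p = s at hp hxa hxb ⊢
  have hs0 : 0 < s := by linarith
  have hη : |minkowski a b| ≤ 1 := by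
    simp only [minkowski, diagonal_apply]; split_ifs <;> simp
  have htime : |R / (s - R) * (e₀ a * e₀ b)| ≤ 1 := by
    rw [abs_mul, abs_of_pos (div_pos hR (by linarith))]
    exact mul_le_one₀ ((div_le_one (by linarith)).2 (by linarith)) (abs_nonneg _)
      (abs_single_zero_mul_le a b)
  have hspace : |R / s ^ 3 * (spatialPart p a * spatialPart p b)| ≤ 1 / 2 := by
    rw [abs_mul, abs_mul, abs_of_pos (by positivity)]
    calc _ ≤ R / s ^ 3 * (s * s) := by gcongr
      _ = R / s := by field_simp
      _ ≤ 1 / 2 := by rw [div_le_div_iff₀ hs0 two_pos]; linarith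
  calc _ ≤ |minkowski a b| + |R / (s - R) * (e₀ a * e₀ b)|
        + |R / s ^ 3 * (spatialPart p a * spatialPart p b)| := abs_add_three _ _ _
    _ ≤ 5 / 2 := by linarith

theorem abs_coordPDeriv_cartMetric_le (a b i : Fin 4) :
    |coordPDeriv (fun q => cartMetric R q a b) i p| ≤ 17 * R / spatialNorm p ^ 2 := by
  have hxa := abs_spatialPart_le p a
  have hxb := abs_spatialPart_le p b
  have hxi := abs_spatialPart_le p i
  have hφ := abs_div_sq_mul_sub_le hR hp
  have hφ' := abs_deriv_div_sq_mul_sub_le hR hp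
  rw [coordPDeriv_cartMetric (by linarith) (by linarith)]
  generalize spatialNorm p = s at hp hxa hxb hxi hφ hφ' ⊢
  have hs0 : 0 < s := by linarith
  have hN : |spatialPart p i / s| ≤ 1 := by
    rw [abs_div, abs_of_pos hs0, div_le_one hs0]; exact hxi
  have htime : |R / s ^ 2 * (spatialPart p i / s) * (e₀ a * e₀ b)| ≤ R / s ^ 2 := by
    rw [abs_mul, abs_mul, abs_of_pos (by positivity)]
    calc _ ≤ R / s ^ 2 * 1 * 1 := by gcongr; exact abs_single_zero_mul_le a b
      _ = R / s ^ 2 := by ring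
  have hradial : |-(R * (3 * s ^ 2 - 2 * R * s)) / (s ^ 2 * (s - R)) ^ 2 * (spatialPart p i / s)
      * (spatialPart p a * spatialPart p b)| ≤ 12 * R / s ^ 2 := by
    rw [abs_mul, abs_mul, abs_mul]
    calc _ ≤ 12 * R / s ^ 4 * 1 * (s * s) := by gcongr
      _ = 12 * R / s ^ 2 := by field_simp
  have hspace : |R / (s ^ 2 * (s - R)) * (spatialPart (Pi.single i 1) a * spatialPart p b
      + spatialPart p a * spatialPart (Pi.single i 1) b)| ≤ 4 * R / s ^ 2 := by
    rw [abs_mul]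
    calc _ ≤ 2 * R / s ^ 3 * (1 * s + s * 1) := by
          gcongr
          refine (abs_add_le _ _).trans ?_
          rw [abs_mul, abs_mul]
          gcongr
          · exact abs_spatialPart_single_le i a
          · exact abs_spatialPart_single_le i b
      _ = 4 * R / s ^ 2 := by field_simp; ring
  calc _ ≤ R / s ^ 2 + (12 * R / s ^ 2 + 4 * R / s ^ 2) :=
        (abs_sub _ _).trans (add_le_add htime ((abs_add_le _ _).trans (add_le_add hradial hspace)))
    _ = 17 * R / s ^ 2 := by ring

end FarField

/-- The Christoffel symbols of the Cartesian Schwarzschild metric are `O(|x|⁻²)`: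
there is a constant `C > 0` (depending only on `R`) with
`|Γ^a_{bc}(x₀,x)| ≤ C/|x|²` whenever `|x| ≥ 2R`. -/
theorem cartesian_christoffel_bound (R : ℝ) (hR : 0 < R) :
    ∃ C > (0 : ℝ), ∀ a b c : Fin 4, ∀ p : Fin 4 → ℝ, 2 * R ≤ spatialNorm p →
      |christoffel (cartMetric R) a b c p| ≤ C / (spatialNorm p) ^ 2 := by
  refine ⟨255 * R, by positivity, fun a b c p hp => ?_⟩
  calc _ ≤ 3 / 2 * (4 : ℕ) * (5 / 2) * (17 * R / spatialNorm p ^ 2) :=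
        abs_christoffel_le (abs_inv_cartMetric_le hR hp) (abs_coordPDeriv_cartMetric_le hR hp) a b c
    _ = 255 * R / spatialNorm p ^ 2 := by push_cast; ring

end
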